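/- Let |ψ₁⟩ = ½(|00⟩+|01⟩−|10⟩+|11⟩), |ψ₂⟩ = ½(|00⟩−|01⟩+|10⟩+|11⟩), |ψ₃⟩ = ½(|00⟩+i|01⟩−i|10⟩−|11⟩), |ψ₄⟩ = ½(|00⟩−i|01⟩+i|10⟩−|11⟩). Then for every i ∈ {1,2,3,4} and every standard basis vector |s⟩ ∈ {|00⟩,|01⟩,|10⟩,|11⟩}, one has |⟨s|ψ_i⟩| = 1/2, and consequently there exists a complex number c with |c| = 1 such that U_{|ψ_i⟩} U_{|s⟩} |ψ_i⟩ = c|s⟩; i.e., the H03-QSS scheme with nonce set {|ψ₁⟩,|ψ₂⟩,|ψ₃⟩,|ψ₄⟩} is perfectly recoverable. -/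

import Mathlib

open scoped ComplexConjugate
open Finset

noncomputable section

/-- Standard (computational) basis vector `|s⟩` of the two-qubit space `ℂ² ⊗ ℂ²`. -/
def e (s : Fin 2 × Fin 2) : Fin 2 × Fin 2 → ℂ := fun p => if p = s then 1 else 0

/-- The standard inner product `⟨u|v⟩` on two-qubit vectors
(conjugate-linear in the first argument). -/
def inner2 (u v : Fin 2 × Fin 2 → ℂ) : ℂ := ∑ p, conj (u p) * v p

/-- The Grover reflection operator `U_{|x⟩} = I - 2|x⟩⟨x|` applied to `v`. -/
def grover (x v : Fin 2 × Fin 2 → ℂ) : Fin 2 × Fin 2 → ℂ :=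
  v - (2 * inner2 x v) • x
/-- The nonce `|ψ₁⟩ = ½(|00⟩ + |01⟩ − |10⟩ + |11⟩)`. -/
def psi1 : Fin 2 × Fin 2 → ℂ :=
  (1 / 2 : ℂ) • (e (0, 0) + e (0, 1) - e (1, 0) + e (1, 1))

/-- The nonce `|ψ₂⟩ = ½(|00⟩ − |01⟩ + |10⟩ + |11⟩)`. -/
def psi2 : Fin 2 × Fin 2 → ℂ :=
  (1 / 2 : ℂ) • (e (0, 0) - e (0, 1) + e (1, 0) + e (1, 1))

/-- The nonce `|ψ₃⟩ = ½(|00⟩ + i|01⟩ − i|10⟩ − |11⟩)`. -/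
def psi3 : Fin 2 × Fin 2 → ℂ :=
  (1 / 2 : ℂ) • (e (0, 0) + Complex.I • e (0, 1) - Complex.I • e (1, 0) - e (1, 1))

/-- The nonce `|ψ₄⟩ = ½(|00⟩ − i|01⟩ + i|10⟩ − |11⟩)`. -/
def psi4 : Fin 2 × Fin 2 → ℂ :=
  (1 / 2 : ℂ) • (e (0, 0) - Complex.I • e (0, 1) + Complex.I • e (1, 0) - e (1, 1))

lemma inner2_e_left (s : Fin 2 × Fin 2) (v : Fin 2 × Fin 2 → ℂ) :
    inner2 (e s) v = v s := by
  simp [inner2, e, apply_ite (conj : ℂ → ℂ)]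

lemma inner2_e_right (s : Fin 2 × Fin 2) (v : Fin 2 × Fin 2 → ℂ) :
    inner2 v (e s) = conj (v s) := by
  simp [inner2, e, mul_ite]

lemma key (ψ : Fin 2 × Fin 2 → ℂ) (hN : inner2 ψ ψ = 1)
    (s : Fin 2 × Fin 2) (ha : ‖ψ s‖ = 1 / 2) :
    ‖inner2 (e s) ψ‖ = 1 / 2 ∧
    ∃ c : ℂ, ‖c‖ = 1 ∧ grover ψ (grover (e s) ψ) = c • e s := by
  have hmc : ψ s * conj (ψ s) = 1 / 4 := by
    rw [mul_comm, Complex.conj_mul']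
    rw [ha]
    norm_num
  refine ⟨by rw [inner2_e_left]; exact ha, -2 * ψ s, by simp [ha], ?_⟩
  have h1 : grover (e s) ψ = ψ - (2 * ψ s) • e s := by
    rw [grover, inner2_e_left]
  have h2 : inner2 ψ (grover (e s) ψ) = 1 / 2 := by
    rw [h1]
    have hlin : inner2 ψ (ψ - (2 * ψ s) • e s)
        = inner2 ψ ψ - (2 * ψ s) * inner2 ψ (e s) := by
      simp only [inner2, Pi.sub_apply, Pi.smul_apply, smul_eq_mul, mul_sub,
        Finset.sum_sub_distrib, Finset.mul_sum]
      congr 1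
      exact Finset.sum_congr rfl fun p _ => by ring
    rw [hlin, hN, inner2_e_right]
    linear_combination (-2 : ℂ) * hmc
  rw [grover, h2, h1]
  funext p
  simp only [Pi.sub_apply, Pi.smul_apply, smul_eq_mul, Pi.neg_apply]
  ring

/-- Each proposed nonce has overlap of modulus `1/2` with every standard basis vector,
and consequently the H03-QSS scheme with nonce set `{|ψ₁⟩,|ψ₂⟩,|ψ₃⟩,|ψ₄⟩}` is perfectly
recoverable: `U_{|ψ⟩}U_{|s⟩}|ψ⟩ = |s⟩` up to a unimodular phase. -/
theorem proposed_nonces_perfectly_recoverable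
    (ψ : Fin 2 × Fin 2 → ℂ) (hψ : ψ ∈ ({psi1, psi2, psi3, psi4} : Set (Fin 2 × Fin 2 → ℂ)))
    (s : Fin 2 × Fin 2) :
    ‖inner2 (e s) ψ‖ = 1 / 2 ∧
    ∃ c : ℂ, ‖c‖ = 1 ∧ grover ψ (grover (e s) ψ) = c • e s := by
  have hN : inner2 ψ ψ = 1 := by
    rcases hψ with h | h | h | h <;> subst h <;>
      simp [inner2, psi1, psi2, psi3, psi4, e, Fintype.sum_prod_type,
        Fin.sum_univ_two, Prod.ext_iff, Complex.ext_iff] <;> norm_num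
  refine key ψ hN s ?_
  rcases hψ with h | h | h | h <;> subst h <;>
    rcases s with ⟨a, b⟩ <;> fin_cases a <;> fin_cases b <;>
      simp [psi1, psi2, psi3, psi4, e, Prod.ext_iff,
        Complex.norm_def, Complex.normSq_apply] <;> norm_num


end
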